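/- arXiv:2605.28455 — 2 statements merged into one kernel-verified Lean document; each statement's English description precedes it below -/
import Mathlib

section
/- Let A be a nonnegative p×p real matrix with no zero column. Then the Birkhoff contraction coefficient satisfies τ(A) = tanh(φ(A)/4), where φ(A) = max_{i,j} h(Aᶜᵢ, Aᶜⱼ) ∈ [0, ∞] is the maximal Hilbert distance between two columns Aᶜᵢ, Aᶜⱼ of A, and tanh(∞/4) is interpreted as 1. In particular, τ(A) < 1 if and only if every row of A is either strictly positive (all entries > 0) or identically zero. -/
open MeasureTheory Filter Matrix
open scoped ENNReal

/-- `elog x` is the extended-real logarithm of a nonnegative real number,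
with `elog x = -∞` for `x ≤ 0`. -/
noncomputable def elog (x : ℝ) : EReal := if x ≤ 0 then ⊥ else ((Real.log x : ℝ) : EReal)

/-- `Mprod A n = A (n-1) * ⋯ * A 0`, i.e. the product `M_n = A_n A_{n-1} ⋯ A_1`
of the first `n` matrices of the (0-indexed) sequence `A`. -/
def Mprod {p : ℕ} (A : ℕ → Matrix (Fin p) (Fin p) ℝ) : ℕ → Matrix (Fin p) (Fin p) ℝ
  | 0 => 1
  | n + 1 => A n * Mprod A n

/-- Every row of `M` is either strictly positive or identically zero. -/
def RowsPosOrZero {p : ℕ} (M : Matrix (Fin p) (Fin p) ℝ) : Prop :=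
  ∀ i, (∀ j, 0 < M i j) ∨ (∀ j, M i j = 0)

/-- `A` is nonnegative and column-allowable: each column contains a strictly positive entry. -/
def ColAllowable {p : ℕ} (A : Matrix (Fin p) (Fin p) ℝ) : Prop :=
  (∀ i j, 0 ≤ A i j) ∧ ∀ j, ∃ i, 0 < A i j

/-- `M = U * S * V` is a singular value decomposition: `U, V` orthogonal and `S` diagonal
with nonnegative nonincreasing diagonal entries. -/
def IsSVD {p : ℕ} (M U S V : Matrix (Fin p) (Fin p) ℝ) : Prop :=
  Uᵀ * U = 1 ∧ U * Uᵀ = 1 ∧ Vᵀ * V = 1 ∧ V * Vᵀ = 1 ∧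
  (∀ i j, i ≠ j → S i j = 0) ∧ (∀ i, 0 ≤ S i i) ∧
  (∀ i j : Fin p, i ≤ j → S j j ≤ S i i) ∧ M = U * S * V

/-- A norm on matrices (all norms on a finite-dimensional space are equivalent). -/
noncomputable def matNorm {p : ℕ} (M : Matrix (Fin p) (Fin p) ℝ) : ℝ := ∑ i, ∑ j, |M i j|

/-- Total variation norm of a vector: `‖v‖_TV = (1/2) ∑ i |v i|`. -/
noncomputable def tvNorm {p : ℕ} (v : Fin p → ℝ) : ℝ := (1 / 2) * ∑ i, |v i|

/-- `inf{λ ≥ 0 : λ y − x ≥ 0 componentwise}`, computed in `[0,∞]` (so `inf ∅ = ∞`). -/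
noncomputable def hilbertNum {p : ℕ} (x y : Fin p → ℝ) : ℝ≥0∞ :=
  sInf {l : ℝ≥0∞ | ∀ k, ENNReal.ofReal (x k) ≤ l * ENNReal.ofReal (y k)}

/-- `sup{λ ≥ 0 : x − λ y ≥ 0 componentwise}`, computed in `[0,∞]`. -/
noncomputable def hilbertDen {p : ℕ} (x y : Fin p → ℝ) : ℝ≥0∞ :=
  sSup {l : ℝ≥0∞ | ∀ k, l * ENNReal.ofReal (y k) ≤ ENNReal.ofReal (x k)}

/-- The Hilbert (projective) distance of two nonnegative nonzero vectors,
`h(x,y) = log( inf{λ ≥ 0 : λy − x ≥ 0} / sup{λ ≥ 0 : x − λy ≥ 0} ) ∈ [0,∞]`. -/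
noncomputable def hilbertDist {p : ℕ} (x y : Fin p → ℝ) : EReal :=
  ENNReal.log (hilbertNum x y / hilbertDen x y)

/-- The ratio `a / b` of two extended reals in `[0,∞]`, with the convention `∞/∞ = 1`. -/
noncomputable def eratio (a b : EReal) : ℝ≥0∞ :=
  if b = ⊤ then (if a = ⊤ then 1 else 0)
  else if a = ⊤ then ⊤
  else ENNReal.ofReal (a.toReal / b.toReal)

/-- The Birkhoff contraction coefficient
`τ(A) = sup{ h(Ax, Ay)/h(x, y) : x, y nonnegative nonzero, 0 < h(x, y) }`,
with the convention `∞/∞ = 1`. -/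
noncomputable def birkhoffCoeff {p : ℕ} (A : Matrix (Fin p) (Fin p) ℝ) : ℝ≥0∞ :=
  sSup {r : ℝ≥0∞ | ∃ x y : Fin p → ℝ, (∀ i, 0 ≤ x i) ∧ x ≠ 0 ∧ (∀ i, 0 ≤ y i) ∧ y ≠ 0 ∧
    0 < hilbertDist x y ∧
    r = eratio (hilbertDist (A.mulVec x) (A.mulVec y)) (hilbertDist x y)}

/-- `φ(A)`: the maximal Hilbert distance between two columns of `A`, in `[0,∞]`. -/
noncomputable def birkhoffPhi {p : ℕ} (A : Matrix (Fin p) (Fin p) ℝ) : EReal :=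
  ⨆ i : Fin p, ⨆ j : Fin p, hilbertDist (fun r => A r i) (fun r => A r j)

/-!
For nonnegative `x, y` with the same support, `h(x, y) = log (M / m)` where `m y ≤ x ≤ M y` are the
best constants; vectors with different supports are at distance `∞`.

Upper bound: with `u = x - m y ≥ 0`, `w = M y - x ≥ 0`, `a = A u`, `b = A w` one has
`(M - m) A x = M a + m b` and `(M - m) A y = a + b`, and the cross ratios `a_i b_j / (a_j b_i)` are
at most `e^φ` because those of the columns of `A` are. So the log-ratio
`log ((Ax)_i / (Ay)_i) - log ((Ax)_j / (Ay)_j)` is `F (log (M / m)) - F 0` for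
`F θ = log (a_i e^θ + b_i) - log (a_j e^θ + b_j)`, and AM-GM bounds `F'` by `tanh (φ / 4)`.

Lower bound: if the columns `i, j` realise `φ < ∞`, then `x = e_j + e^θ e_i`, `y = e_j + e^θ' e_i`
have `h(x, y) = θ - θ'` and `h(Ax, Ay) ≥ F θ - F θ'` for the `F` of the two rows extremal for
`A_{·i} / A_{·j}`. For that `F`, `F' = tanh (φ / 4)` at some `θ'`, and `θ` slightly larger gives
ratios close to `tanh (φ / 4)`. If `φ = ∞`, the unit vectors of two columns at distance `∞` give the
ratio `∞ / ∞ = 1`, while `h(Ax, Ay) ≤ h(x, y)` always.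

Finally `φ < ∞` iff all columns have the same support, i.e. every row of `A` is positive or zero.
-/

open Real

namespace Real

lemma tanh_eq_exp_two_mul (t : ℝ) : tanh t = (exp (2 * t) - 1) / (exp (2 * t) + 1) := by
  have h : exp (2 * t) = exp t * exp t := by rw [← exp_add]; ring_nf
  rw [tanh_eq, h, exp_neg]
  field_simp

lemma tanh_nonneg {t : ℝ} (ht : 0 ≤ t) : 0 ≤ tanh t := by
  rw [tanh_eq_sinh_div_cosh]
  exact div_nonneg (sinh_nonneg_iff.2 ht) (cosh_pos t).le

end Real

section

variable {a b a' b' : ℝ}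

lemma mul_exp_add_pos (ha : 0 ≤ a) (hb : 0 ≤ b) (hab : 0 < a + b) (θ : ℝ) :
    0 < a * exp θ + b := by
  rcases ha.lt_or_eq with ha | rfl
  · positivity
  · simpa using hab

lemma hasDerivAt_log_mul_exp_add {θ : ℝ} (h : 0 < a * exp θ + b) :
    HasDerivAt (fun θ => log (a * exp θ + b)) (a * exp θ / (a * exp θ + b)) θ :=
  (((hasDerivAt_exp θ).const_mul a).add_const b).log h.ne'

lemma mul_div_add_sub_le {E s : ℝ} (hE : 1 ≤ E) (ha : 0 ≤ a) (hb : 0 ≤ b) (ha' : 0 ≤ a')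
    (hb' : 0 ≤ b') (hs : 0 < s) (h : 0 < a * s + b) (h' : 0 < a' * s + b')
    (hcross : a * b' ≤ E ^ 2 * (a' * b)) :
    a * s / (a * s + b) - a' * s / (a' * s + b') ≤ (E - 1) / (E + 1) := by
  rw [div_sub_div _ _ h.ne' h'.ne', div_le_div_iff₀ (by positivity) (by positivity)]
  -- with `α = √(a b')`, `β = √(a' b)`: `α ≤ E β`, and `(a s + b)(a' s + b') ≥ s (α + β)²` by AM-GM
  set α := √(a * b')
  set β := √(a' * b)
  have hα : α ^ 2 = a * b' := sq_sqrt (by positivity)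
  have hβ : β ^ 2 = a' * b := sq_sqrt (by positivity)
  have hαβ : α ≤ E * β := by
    simpa [sqrt_mul' _ (mul_nonneg ha' hb), sqrt_sq (by linarith : 0 ≤ E)] using
      sqrt_le_sqrt hcross
  have hamgm : 2 * (α * β) * s ≤ a * a' * s ^ 2 + b * b' := by
    have hprod : α * β = √(a * a') * √(b * b') := by
      rw [← sqrt_mul (mul_nonneg ha hb'), ← sqrt_mul (mul_nonneg ha ha')]
      ring_nf
    have h1 : √(a * a') ^ 2 = a * a' := sq_sqrt (by positivity)
    have h2 : √(b * b') ^ 2 = b * b' := sq_sqrt (by positivity)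
    nlinarith [sq_nonneg (√(a * a') * s - √(b * b'))]
  have hα0 : 0 ≤ α := sqrt_nonneg _
  have hβ0 : 0 ≤ β := sqrt_nonneg _
  nlinarith [mul_nonneg (sub_nonneg.2 hαβ) (add_nonneg hα0 hβ0), mul_nonneg hs.le (sub_nonneg.2 hE)]

lemma log_mul_exp_add_sub_le {D θ : ℝ} (hD : 0 ≤ D) (ha : 0 ≤ a) (hb : 0 ≤ b) (ha' : 0 ≤ a')
    (hb' : 0 ≤ b') (hab : 0 < a + b) (hab' : 0 < a' + b') (hcross : a * b' ≤ exp D * (a' * b))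
    (hθ : 0 ≤ θ) :
    log (a * exp θ + b) - log (a' * exp θ + b') - (log (a + b) - log (a' + b')) ≤
      tanh (D / 4) * θ := by
  set F := fun θ => log (a * exp θ + b) - log (a' * exp θ + b')
  have hF : ∀ θ, HasDerivAt F
      (a * exp θ / (a * exp θ + b) - a' * exp θ / (a' * exp θ + b')) θ := fun θ =>
    (hasDerivAt_log_mul_exp_add (mul_exp_add_pos ha hb hab θ)).sub
      (hasDerivAt_log_mul_exp_add (mul_exp_add_pos ha' hb' hab' θ))
  have hF' : ∀ θ, deriv F θ ≤ tanh (D / 4) := fun θ => by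
    have hE : exp (D / 2) ^ 2 = exp D := by rw [← exp_nat_mul]; ring_nf
    rw [(hF θ).deriv, tanh_eq_exp_two_mul, show 2 * (D / 4) = D / 2 by ring]
    exact mul_div_add_sub_le (one_le_exp (by linarith)) ha hb ha' hb' (exp_pos θ)
      (mul_exp_add_pos ha hb hab θ) (mul_exp_add_pos ha' hb' hab' θ) (hE ▸ hcross)
  simpa [F] using
    image_sub_le_mul_sub_of_deriv_le (fun θ => (hF θ).differentiableAt) hF' hθ

open Topology in
lemma exists_lt_log_mul_exp_add_sub {D c : ℝ} (ha : 0 < a) (hb : 0 < b) (ha' : 0 < a')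
    (hb' : 0 < b') (hD : log (a / b) - log (a' / b') = D) (hc : c < tanh (D / 4)) :
    ∃ θ' θ, θ' < θ ∧ c * (θ - θ') <
      log (a * exp θ + b) - log (a' * exp θ + b') -
        (log (a * exp θ' + b) - log (a' * exp θ' + b')) := by
  set F := fun θ => log (a * exp θ + b) - log (a' * exp θ + b')
  -- at `θ₀` the two ratios `a e^θ / b` and `a' e^θ / b'` are `e^(D/2)` and `e^(-D/2)`,
  -- which makes `F' θ₀ = tanh (D / 4)`
  set θ₀ := -(log (a / b) + log (a' / b')) / 2
  have h₁ : a * exp θ₀ = b * exp (D / 2) := by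
    rw [← hD, show (log (a / b) - log (a' / b')) / 2 = log (a / b) + θ₀ by ring, exp_add,
      exp_log (div_pos ha hb)]
    field_simp
  have h₂ : a' * exp θ₀ = b' * exp (-(D / 2)) := by
    rw [← hD, show -((log (a / b) - log (a' / b')) / 2) = log (a' / b') + θ₀ by ring, exp_add,
      exp_log (div_pos ha' hb')]
    field_simp
  have hderiv : HasDerivAt F (tanh (D / 4)) θ₀ := by
    refine ((hasDerivAt_log_mul_exp_add (a := a) (b := b) (θ := θ₀) (by positivity)).sub
      (hasDerivAt_log_mul_exp_add (a := a') (b := b') (θ := θ₀) (by positivity))).congr_deriv ?_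
    rw [h₁, h₂, tanh_eq_exp_two_mul, show 2 * (D / 4) = D / 2 by ring, exp_neg]
    field_simp
    ring
  have hslope : Tendsto (slope F θ₀) (𝓝[>] θ₀) (𝓝 (tanh (D / 4))) :=
    (hasDerivAt_iff_tendsto_slope.1 hderiv).mono_left (nhdsWithin_mono _ fun _ h => ne_of_gt h)
  obtain ⟨θ, hθ, hθ₀⟩ := ((hslope.eventually (lt_mem_nhds hc)).and self_mem_nhdsWithin).exists
  refine ⟨θ₀, θ, hθ₀, ?_⟩
  rwa [slope_def_field, lt_div_iff₀ (sub_pos.2 hθ₀)] at hθ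

end

lemma exists_pos_of_nonneg_of_ne_zero {ι : Type*} {x : ι → ℝ} (hx : 0 ≤ x) (hx0 : x ≠ 0) :
    ∃ k, 0 < x k :=
  (Pi.lt_def.1 (hx.lt_of_ne' hx0)).2

section

variable {p : ℕ} {x y : Fin p → ℝ}

lemma ofReal_div_ofReal_le_hilbertNum (k : Fin p) :
    ENNReal.ofReal (x k) / ENNReal.ofReal (y k) ≤ hilbertNum x y :=
  le_sInf fun _ hl => ENNReal.div_le_of_le_mul (hl k)

lemma hilbertDen_le_ofReal_div {k : Fin p} (hyk : 0 < y k) :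
    hilbertDen x y ≤ ENNReal.ofReal (x k / y k) := by
  rw [ENNReal.ofReal_div_of_pos hyk]
  exact sSup_le fun _ hl =>
    (ENNReal.le_div_iff_mul_le (.inl (by simpa using hyk)) (.inl ENNReal.ofReal_ne_top)).2 (hl k)

lemma hilbertNum_le_ofReal {M : ℝ} (hM : 0 ≤ M) (hhi : ∀ k, x k ≤ M * y k) :
    hilbertNum x y ≤ ENNReal.ofReal M :=
  sInf_le fun k => by
    rw [← ENNReal.ofReal_mul hM]
    exact ENNReal.ofReal_le_ofReal (hhi k)

lemma ofReal_le_hilbertDen {m : ℝ} (hm : 0 ≤ m) (hlo : ∀ k, m * y k ≤ x k) :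
    ENNReal.ofReal m ≤ hilbertDen x y :=
  le_sSup fun k => by
    rw [← ENNReal.ofReal_mul hm]
    exact ENNReal.ofReal_le_ofReal (hlo k)

lemma hilbertDist_le_log_sub {m M : ℝ} (hm : 0 < m) (hmM : m ≤ M)
    (hlo : ∀ k, m * y k ≤ x k) (hhi : ∀ k, x k ≤ M * y k) :
    hilbertDist x y ≤ ((log M - log m : ℝ) : EReal) := by
  have hM : 0 < M := hm.trans_le hmM
  calc hilbertDist x y ≤ ENNReal.log (ENNReal.ofReal M / ENNReal.ofReal m) :=
        ENNReal.log_monotone <| ENNReal.div_le_div (hilbertNum_le_ofReal hM.le hhi)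
          (ofReal_le_hilbertDen hm.le hlo)
    _ = ((log M - log m : ℝ) : EReal) := by
        rw [← ENNReal.ofReal_div_of_pos hm, ENNReal.log_ofReal_of_pos (div_pos hM hm),
          log_div hM.ne' hm.ne']

lemma log_sub_le_hilbertDist {i j : Fin p} (hxi : 0 < x i) (hyi : 0 < y i)
    (hxj : 0 < x j) (hyj : 0 < y j) :
    ((log (x i / y i) - log (x j / y j) : ℝ) : EReal) ≤ hilbertDist x y := by
  have hi : 0 < x i / y i := div_pos hxi hyi
  have hj : 0 < x j / y j := div_pos hxj hyj
  calc ((log (x i / y i) - log (x j / y j) : ℝ) : EReal)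
      = ENNReal.log (ENNReal.ofReal (x i / y i) / ENNReal.ofReal (x j / y j)) := by
        rw [← ENNReal.ofReal_div_of_pos hj, ENNReal.log_ofReal_of_pos (div_pos hi hj),
          log_div hi.ne' hj.ne']
    _ ≤ hilbertDist x y := by
        refine ENNReal.log_monotone (ENNReal.div_le_div ?_ (hilbertDen_le_ofReal_div hyj))
        rw [ENNReal.ofReal_div_of_pos hyi]
        exact ofReal_div_ofReal_le_hilbertNum i

lemma mul_le_exp_mul_of_hilbertDist_le {i j : Fin p} {c : ℝ} (hxi : 0 < x i) (hyi : 0 < y i)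
    (hxj : 0 < x j) (hyj : 0 < y j) (h : hilbertDist x y ≤ c) :
    x i * y j ≤ exp c * (x j * y i) := by
  have hlog : log (x i / y i) - log (x j / y j) ≤ c :=
    EReal.coe_le_coe_iff.1 ((log_sub_le_hilbertDist hxi hyi hxj hyj).trans h)
  rw [← log_div (by positivity) (by positivity), log_le_iff_le_exp (by positivity),
    div_le_iff₀ (by positivity)] at hlog
  field_simp at hlog
  linarith

lemma hilbertDist_self_le (x : Fin p → ℝ) : hilbertDist x x ≤ 0 := by
  simpa using hilbertDist_le_log_sub (x := x) (y := x) one_pos le_rfl (by simp) (by simp)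

lemma hilbertDist_eq_top_of_pos_of_nonpos {j k : Fin p} (hxk : 0 < x k) (hyk : y k ≤ 0)
    (hyj : 0 < y j) : hilbertDist x y = ⊤ := by
  have hnum : hilbertNum x y = ⊤ := by
    refine top_unique (le_sInf fun l hl => absurd (hl k) ?_)
    simpa [ENNReal.ofReal_of_nonpos hyk] using hxk
  rw [hilbertDist, hnum, ENNReal.top_div_of_ne_top
    (ne_top_of_le_ne_top ENNReal.ofReal_ne_top (hilbertDen_le_ofReal_div hyj))]
  simp

lemma hilbertDist_eq_top_of_nonpos_of_pos {j k : Fin p} (hxk : x k ≤ 0) (hyk : 0 < y k)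
    (hxj : 0 < x j) : hilbertDist x y = ⊤ := by
  have hden : hilbertDen x y = 0 :=
    le_antisymm (sSup_le fun l hl => by simpa [ENNReal.ofReal_of_nonpos hxk, hyk.not_ge] using hl k)
      bot_le
  have hnum : hilbertNum x y ≠ 0 := by
    refine (lt_of_lt_of_le ?_ (ofReal_div_ofReal_le_hilbertNum j)).ne'
    exact ENNReal.div_pos (by simpa using hxj) ENNReal.ofReal_ne_top
  rw [hilbertDist, hden, ENNReal.div_zero hnum]
  simp

lemma pos_iff_pos_of_hilbertDist_ne_top (hx : 0 ≤ x) (hy : 0 ≤ y) (hx0 : x ≠ 0) (hy0 : y ≠ 0)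
    (h : hilbertDist x y ≠ ⊤) (k : Fin p) : 0 < x k ↔ 0 < y k := by
  obtain ⟨i, hxi⟩ := exists_pos_of_nonneg_of_ne_zero hx hx0
  obtain ⟨j, hyj⟩ := exists_pos_of_nonneg_of_ne_zero hy hy0
  constructor
  · exact fun hxk => not_le.1 fun hyk => h (hilbertDist_eq_top_of_pos_of_nonpos hxk hyk hyj)
  · exact fun hyk => not_le.1 fun hxk => h (hilbertDist_eq_top_of_nonpos_of_pos hxk hyk hxi)

lemma exists_extremal_ratios (hx : 0 ≤ x) (hy : 0 ≤ y) (hy0 : y ≠ 0)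
    (hsupp : ∀ k, 0 < x k ↔ 0 < y k) :
    ∃ i j, 0 < x i ∧ 0 < y i ∧ 0 < x j ∧ 0 < y j ∧
      (∀ k, x j / y j * y k ≤ x k) ∧ (∀ k, x k ≤ x i / y i * y k) := by
  set S := Finset.univ.filter fun k => 0 < y k
  have hS : S.Nonempty := by
    obtain ⟨k, hk⟩ := exists_pos_of_nonneg_of_ne_zero hy hy0
    exact ⟨k, by simp [S, hk]⟩
  obtain ⟨i, hiS, hi⟩ := S.exists_max_image (fun k => x k / y k) hS
  obtain ⟨j, hjS, hj⟩ := S.exists_min_image (fun k => x k / y k) hS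
  simp only [S, Finset.mem_filter, Finset.mem_univ, true_and] at hiS hjS hi hj
  refine ⟨i, j, (hsupp i).2 hiS, hiS, (hsupp j).2 hjS, hjS, fun k => ?_, fun k => ?_⟩ <;>
    rcases (hy k : (0 : ℝ) ≤ y k).lt_or_eq with hyk | hyk
  · exact (le_div_iff₀ hyk).1 (hj k hyk)
  · simpa [← hyk] using hx k
  · exact (div_le_iff₀ hyk).1 (hi k hyk)
  · have : x k = 0 := le_antisymm (not_lt.1 fun h => (hsupp k).1 h |>.ne hyk) (hx k)
    simp [← hyk, this]

lemma hilbertDist_eq_log_sub {i j : Fin p} (hxi : 0 < x i) (hyi : 0 < y i) (hxj : 0 < x j)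
    (hyj : 0 < y j) (hlo : ∀ k, x j / y j * y k ≤ x k) (hhi : ∀ k, x k ≤ x i / y i * y k) :
    hilbertDist x y = ((log (x i / y i) - log (x j / y j) : ℝ) : EReal) := by
  have hmM : x j / y j ≤ x i / y i := (div_le_iff₀ hyj).2 (hhi j)
  exact le_antisymm (hilbertDist_le_log_sub (div_pos hxj hyj) hmM hlo hhi)
    (log_sub_le_hilbertDist hxi hyi hxj hyj)

lemma hilbertDist_ne_top_of_pos_iff_pos (hx : 0 ≤ x) (hy : 0 ≤ y) (hy0 : y ≠ 0)
    (hsupp : ∀ k, 0 < x k ↔ 0 < y k) : hilbertDist x y ≠ ⊤ := by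
  obtain ⟨i, j, hxi, hyi, hxj, hyj, hlo, hhi⟩ := exists_extremal_ratios hx hy hy0 hsupp
  rw [hilbertDist_eq_log_sub hxi hyi hxj hyj hlo hhi]
  exact EReal.coe_ne_top _

lemma exists_bounds_of_hilbertDist_ne_top (hx : 0 ≤ x) (hy : 0 ≤ y) (hx0 : x ≠ 0) (hy0 : y ≠ 0)
    (h : hilbertDist x y ≠ ⊤) :
    ∃ m M : ℝ, 0 < m ∧ m ≤ M ∧ (∀ k, m * y k ≤ x k) ∧ (∀ k, x k ≤ M * y k) ∧
      hilbertDist x y = ((log M - log m : ℝ) : EReal) := by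
  obtain ⟨i, j, hxi, hyi, hxj, hyj, hlo, hhi⟩ :=
    exists_extremal_ratios hx hy hy0 (pos_iff_pos_of_hilbertDist_ne_top hx hy hx0 hy0 h)
  exact ⟨_, _, div_pos hxj hyj, (div_le_iff₀ hyj).2 (hhi j), hlo, hhi,
    hilbertDist_eq_log_sub hxi hyi hxj hyj hlo hhi⟩

end

namespace Matrix

variable {ι κ : Type*} [Fintype κ] {A : Matrix ι κ ℝ} {u w : κ → ℝ}

lemma mulVec_nonneg (hA : ∀ i j, 0 ≤ A i j) (hu : 0 ≤ u) : 0 ≤ A *ᵥ u :=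
  fun i => dotProduct_nonneg_of_nonneg (fun j => hA i j) hu

lemma mulVec_mono (hA : ∀ i j, 0 ≤ A i j) (huw : u ≤ w) : A *ᵥ u ≤ A *ᵥ w :=
  fun i => dotProduct_le_dotProduct_of_nonneg_left huw (fun j => hA i j)

lemma mul_mulVec_le_mulVec (hA : ∀ i j, 0 ≤ A i j) {c : ℝ} (h : ∀ k, c * u k ≤ w k) (i : ι) :
    c * (A *ᵥ u) i ≤ (A *ᵥ w) i := by
  simpa [mulVec_smul] using mulVec_mono hA (u := c • u) (fun k => h k) i

lemma mulVec_le_mul_mulVec (hA : ∀ i j, 0 ≤ A i j) {c : ℝ} (h : ∀ k, w k ≤ c * u k) (i : ι) :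
    (A *ᵥ w) i ≤ c * (A *ᵥ u) i := by
  simpa [mulVec_smul] using mulVec_mono hA (w := c • u) (fun k => h k) i

lemma mul_le_mulVec (hA : ∀ i j, 0 ≤ A i j) (hu : 0 ≤ u) (i : ι) (k : κ) :
    A i k * u k ≤ (A *ᵥ u) i :=
  Finset.single_le_sum (f := fun j => A i j * u j) (fun j _ => mul_nonneg (hA i j) (hu j))
    (Finset.mem_univ k)

lemma mulVec_mul_mulVec_le {C : ℝ} (hcross : ∀ i j k l, A i k * A j l ≤ C * (A j k * A i l))
    (hu : 0 ≤ u) (hw : 0 ≤ w) (i j : ι) :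
    (A *ᵥ u) i * (A *ᵥ w) j ≤ C * ((A *ᵥ u) j * (A *ᵥ w) i) := by
  simp only [mulVec, dotProduct]
  rw [Finset.sum_mul_sum, Finset.sum_mul_sum, Finset.mul_sum]
  refine Finset.sum_le_sum fun k _ => ?_
  rw [Finset.mul_sum]
  refine Finset.sum_le_sum fun l _ => ?_
  have := mul_le_mul_of_nonneg_right (hcross i j k l) (mul_nonneg (hu k) (hw l))
  linarith

end Matrix

section

variable {p q : ℕ} {A : Matrix (Fin p) (Fin q) ℝ} {x y : Fin q → ℝ} {m M : ℝ}

lemma hilbertDist_mulVec_le_log_sub (hA : ∀ i j, 0 ≤ A i j) (hm : 0 < m) (hmM : m ≤ M)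
    (hlo : ∀ k, m * y k ≤ x k) (hhi : ∀ k, x k ≤ M * y k) :
    hilbertDist (A *ᵥ x) (A *ᵥ y) ≤ ((log M - log m : ℝ) : EReal) :=
  hilbertDist_le_log_sub hm hmM (mul_mulVec_le_mulVec hA hlo) (mulVec_le_mul_mulVec hA hhi)

lemma log_div_sub_log_div_mulVec_le (hA : ∀ i j, 0 ≤ A i j) {D : ℝ} (hD : 0 ≤ D)
    (hcross : ∀ i j k l, A i k * A j l ≤ exp D * (A j k * A i l))
    (hm : 0 < m) (hmM : m < M) (hlo : ∀ k, m * y k ≤ x k) (hhi : ∀ k, x k ≤ M * y k)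
    {i j : Fin p} (hi : 0 < (A *ᵥ y) i) (hj : 0 < (A *ᵥ y) j) :
    log ((A *ᵥ x) i / (A *ᵥ y) i) - log ((A *ᵥ x) j / (A *ᵥ y) j) ≤
      tanh (D / 4) * (log M - log m) := by
  set u := x - m • y
  set w := M • y - x
  have hu : 0 ≤ u := fun k => by simpa [u] using hlo k
  have hw : 0 ≤ w := fun k => by simpa [w] using hhi k
  set a := A *ᵥ u
  set b := A *ᵥ w
  have hax : ∀ r, (M - m) * (A *ᵥ x) r = M * a r + m * b r := fun r => by
    simp only [a, b, u, w, mulVec_sub, mulVec_smul, Pi.sub_apply, Pi.smul_apply, smul_eq_mul]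
    ring
  have hay : ∀ r, (M - m) * (A *ᵥ y) r = a r + b r := fun r => by
    simp only [a, b, u, w, mulVec_sub, mulVec_smul, Pi.sub_apply, Pi.smul_apply, smul_eq_mul]
    ring
  set θ := log M - log m
  have hθ : exp θ = M / m := by rw [exp_sub, exp_log (hm.trans hmM), exp_log hm]
  have hab : ∀ r, 0 < (A *ᵥ y) r → 0 < a r + b r := fun r hr => by
    rw [← hay]; exact mul_pos (sub_pos.2 hmM) hr
  have hlog : ∀ r, 0 < (A *ᵥ y) r →
      log ((A *ᵥ x) r / (A *ᵥ y) r) = log m + (log (a r * exp θ + b r) - log (a r + b r)) := by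
    intro r hr
    have hpos := mul_exp_add_pos (mulVec_nonneg hA hu r) (mulVec_nonneg hA hw r) (hab r hr) θ
    have hmab : m * (a r * (M / m) + b r) = M * a r + m * b r := by field_simp
    have hratio : (A *ᵥ x) r / (A *ᵥ y) r = m * ((a r * exp θ + b r) / (a r + b r)) := by
      rw [eq_comm, ← mul_div_assoc, div_eq_div_iff (hab r hr).ne' hr.ne', hθ, hmab]
      linear_combination (A *ᵥ x) r * hay r - (A *ᵥ y) r * hax r
    rw [hratio, log_mul hm.ne' (div_pos hpos (hab r hr)).ne', log_div hpos.ne' (hab r hr).ne']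
  rw [hlog i hi, hlog j hj]
  linarith [log_mul_exp_add_sub_le hD (mulVec_nonneg hA hu i) (mulVec_nonneg hA hw i)
    (mulVec_nonneg hA hu j) (mulVec_nonneg hA hw j) (hab i hi) (hab j hj)
    (mulVec_mul_mulVec_le hcross hu hw i j) (sub_nonneg.2 (log_le_log hm hmM.le))]

lemma hilbertDist_mulVec_le_tanh (hA : ∀ i j, 0 ≤ A i j) {D : ℝ} (hD : 0 ≤ D)
    (hcross : ∀ i j k l, A i k * A j l ≤ exp D * (A j k * A i l)) (hy : 0 ≤ y)
    (hAy : A *ᵥ y ≠ 0) (hm : 0 < m) (hmM : m < M) (hlo : ∀ k, m * y k ≤ x k)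
    (hhi : ∀ k, x k ≤ M * y k) :
    hilbertDist (A *ᵥ x) (A *ᵥ y) ≤ ((tanh (D / 4) * (log M - log m) : ℝ) : EReal) := by
  have hAlo := mul_mulVec_le_mulVec hA hlo
  have hAhi := mulVec_le_mul_mulVec hA hhi
  have hAy₀ : 0 ≤ A *ᵥ y := mulVec_nonneg hA hy
  have hAx₀ : 0 ≤ A *ᵥ x := fun r => (mul_nonneg hm.le (hAy₀ r)).trans (hAlo r)
  have hsupp : ∀ r, 0 < (A *ᵥ x) r ↔ 0 < (A *ᵥ y) r := fun r =>
    ⟨fun h => pos_of_mul_pos_right (h.trans_le (hAhi r)) (hm.trans hmM).le,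
      fun h => (mul_pos hm h).trans_le (hAlo r)⟩
  obtain ⟨i, j, hxi, hyi, hxj, hyj, hlo', hhi'⟩ := exists_extremal_ratios hAx₀ hAy₀ hAy hsupp
  rw [hilbertDist_eq_log_sub hxi hyi hxj hyj hlo' hhi']
  exact_mod_cast log_div_sub_log_div_mulVec_le hA hD hcross hm hmM hlo hhi hyi hyj

end

section

variable {a b : EReal}

lemma eratio_le_ofReal {c : ℝ} (hc : 0 ≤ c) (hb : 0 < b) (hbt : b ≠ ⊤)
    (hab : a ≤ ((c * b.toReal : ℝ) : EReal)) : eratio a b ≤ ENNReal.ofReal c := by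
  obtain ⟨β, rfl⟩ : ∃ β : ℝ, b = β := ⟨b.toReal, (EReal.coe_toReal hbt hb.ne_bot).symm⟩
  have hβ : 0 < β := EReal.coe_pos.1 hb
  have hat : a ≠ ⊤ := ne_top_of_le_ne_top (EReal.coe_ne_top _) hab
  rw [eratio, if_neg (EReal.coe_ne_top β), if_neg hat, EReal.toReal_coe]
  refine ENNReal.ofReal_le_ofReal ((div_le_iff₀ hβ).2 ?_)
  induction a using EReal.rec with
  | bot => simpa using mul_nonneg hc hβ.le
  | coe a => exact_mod_cast hab
  | top => exact absurd rfl hat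

lemma eratio_top_le_one : eratio a ⊤ ≤ 1 := by
  simp only [eratio, if_true]
  split_ifs <;> simp

lemma eratio_top_of_ne_top (ha : a ≠ ⊤) : eratio a ⊤ = 0 := by simp [eratio, ha]

lemma eratio_coe_coe (a b : ℝ) : eratio a b = ENNReal.ofReal (a / b) := by simp [eratio]

end

section

variable {p : ℕ} {A : Matrix (Fin p) (Fin p) ℝ} {x y : Fin p → ℝ}

lemma birkhoffCoeff_le {c : ℝ≥0∞}
    (h : ∀ x y : Fin p → ℝ, 0 ≤ x → x ≠ 0 → 0 ≤ y → y ≠ 0 → 0 < hilbertDist x y →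
      eratio (hilbertDist (A *ᵥ x) (A *ᵥ y)) (hilbertDist x y) ≤ c) :
    birkhoffCoeff A ≤ c :=
  sSup_le <| by
    rintro _ ⟨x, y, hx, hx0, hy, hy0, hxy, rfl⟩
    exact h x y hx hx0 hy hy0 hxy

lemma eratio_le_birkhoffCoeff {x y : Fin p → ℝ} (hx : 0 ≤ x) (hx0 : x ≠ 0) (hy : 0 ≤ y)
    (hy0 : y ≠ 0) (hxy : 0 < hilbertDist x y) :
    eratio (hilbertDist (A *ᵥ x) (A *ᵥ y)) (hilbertDist x y) ≤ birkhoffCoeff A :=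
  le_sSup ⟨x, y, hx, hx0, hy, hy0, hxy, rfl⟩

lemma le_birkhoffPhi (i j : Fin p) :
    hilbertDist (fun r => A r i) (fun r => A r j) ≤ birkhoffPhi A :=
  le_iSup₂ (f := fun i j => hilbertDist (fun r => A r i) (fun r => A r j)) i j

lemma exists_eq_birkhoffPhi (h : birkhoffPhi A ≠ ⊥) :
    ∃ i j, birkhoffPhi A = hilbertDist (fun r => A r i) (fun r => A r j) := by
  rcases isEmpty_or_nonempty (Fin p) with hp | hp
  · simp [birkhoffPhi] at h
  · obtain ⟨⟨i, j⟩, hmax⟩ := Finite.exists_max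
      fun ij : Fin p × Fin p => hilbertDist (fun r => A r ij.1) (fun r => A r ij.2)
    exact ⟨i, j, le_antisymm (iSup₂_le fun i' j' => hmax (i', j')) (le_birkhoffPhi i j)⟩

lemma col_ne_zero (hcol : ∀ j, ∃ i, 0 < A i j) (k : Fin p) : (fun r => A r k) ≠ 0 := fun h => by
  obtain ⟨i, hi⟩ := hcol k
  exact hi.ne' (congrFun h i)

lemma mulVec_ne_zero (hA : ∀ i j, 0 ≤ A i j) (hcol : ∀ j, ∃ i, 0 < A i j) (hx : 0 ≤ x)
    (hx0 : x ≠ 0) : A *ᵥ x ≠ 0 := fun h => by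
  obtain ⟨k, hk⟩ := exists_pos_of_nonneg_of_ne_zero hx hx0
  obtain ⟨i, hi⟩ := hcol k
  simpa [h] using (mul_pos hi hk).trans_le (mul_le_mulVec hA hx i k)

lemma birkhoffPhi_toReal_nonneg (hcol : ∀ j, ∃ i, 0 < A i j) : 0 ≤ (birkhoffPhi A).toReal := by
  rcases isEmpty_or_nonempty (Fin p) with hp | ⟨⟨k⟩⟩
  · simp [birkhoffPhi]
  · obtain ⟨i, hi⟩ := hcol k
    refine EReal.toReal_nonneg (le_trans ?_ (le_birkhoffPhi k k))
    simpa using log_sub_le_hilbertDist (x := fun r => A r k) hi hi hi hi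

lemma pos_iff_pos_of_birkhoffPhi_ne_top (hA : ∀ i j, 0 ≤ A i j) (hcol : ∀ j, ∃ i, 0 < A i j)
    (hφ : birkhoffPhi A ≠ ⊤) (i k l : Fin p) : 0 < A i k ↔ 0 < A i l :=
  pos_iff_pos_of_hilbertDist_ne_top (fun r => hA r k) (fun r => hA r l) (col_ne_zero hcol k)
    (col_ne_zero hcol l) (ne_top_of_le_ne_top hφ (le_birkhoffPhi k l)) i

lemma mul_le_exp_mul_of_birkhoffPhi_ne_top (hA : ∀ i j, 0 ≤ A i j)
    (hcol : ∀ j, ∃ i, 0 < A i j) (hφ : birkhoffPhi A ≠ ⊤) (i j k l : Fin p) :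
    A i k * A j l ≤ exp (birkhoffPhi A).toReal * (A j k * A i l) := by
  rcases (hA i k).eq_or_lt with hik | hik
  · rw [← hik, zero_mul]
    exact mul_nonneg (exp_pos _).le (mul_nonneg (hA j k) (hA i l))
  rcases (hA j l).eq_or_lt with hjl | hjl
  · rw [← hjl, mul_zero]
    exact mul_nonneg (exp_pos _).le (mul_nonneg (hA j k) (hA i l))
  have hsupp := pos_iff_pos_of_birkhoffPhi_ne_top hA hcol hφ
  exact mul_le_exp_mul_of_hilbertDist_le (x := fun r => A r k) (y := fun r => A r l) hik
    ((hsupp i k l).1 hik) ((hsupp j k l).2 hjl) hjl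
    ((le_birkhoffPhi k l).trans (EReal.le_coe_toReal hφ))

lemma birkhoffPhi_ne_top_iff (hA : ∀ i j, 0 ≤ A i j) (hcol : ∀ j, ∃ i, 0 < A i j) :
    birkhoffPhi A ≠ ⊤ ↔ RowsPosOrZero A := by
  refine ⟨fun hφ i => ?_, fun hrows hφ => ?_⟩
  · by_cases h : ∃ k, 0 < A i k
    · obtain ⟨k, hk⟩ := h
      exact .inl fun l => (pos_iff_pos_of_birkhoffPhi_ne_top hA hcol hφ i k l).1 hk
    · simp only [not_exists, not_lt] at h
      exact .inr fun l => le_antisymm (h l) (hA i l)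
  · obtain ⟨k, l, hkl⟩ := exists_eq_birkhoffPhi (A := A) (by simp [hφ])
    refine hilbertDist_ne_top_of_pos_iff_pos (fun r => hA r k) (fun r => hA r l)
      (col_ne_zero hcol l) (fun r => ?_) (hkl ▸ hφ)
    rcases hrows r with h | h
    · exact iff_of_true (h k) (h l)
    · simp [h]

lemma hilbertDist_mulVec_ne_top (hA : ∀ i j, 0 ≤ A i j) (hcol : ∀ j, ∃ i, 0 < A i j)
    (hrows : RowsPosOrZero A) (hx : 0 ≤ x) (hx0 : x ≠ 0) (hy : 0 ≤ y) (hy0 : y ≠ 0) :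
    hilbertDist (A *ᵥ x) (A *ᵥ y) ≠ ⊤ := by
  obtain ⟨k, hk⟩ := exists_pos_of_nonneg_of_ne_zero hx hx0
  obtain ⟨l, hl⟩ := exists_pos_of_nonneg_of_ne_zero hy hy0
  refine hilbertDist_ne_top_of_pos_iff_pos (mulVec_nonneg hA hx) (mulVec_nonneg hA hy)
    (mulVec_ne_zero hA hcol hy hy0) fun i => ?_
  rcases hrows i with h | h
  · exact iff_of_true ((mul_pos (h k) hk).trans_le (mul_le_mulVec hA hx i k))
      ((mul_pos (h l) hl).trans_le (mul_le_mulVec hA hy i l))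
  · simp [mulVec, dotProduct, h]

lemma birkhoffCoeff_le_one (hA : ∀ i j, 0 ≤ A i j) : birkhoffCoeff A ≤ 1 := by
  refine birkhoffCoeff_le fun x y hx hx0 hy hy0 hxy => ?_
  by_cases htop : hilbertDist x y = ⊤
  · rw [htop]
    exact eratio_top_le_one
  obtain ⟨m, M, hm, hmM, hlo, hhi, hdist⟩ := exists_bounds_of_hilbertDist_ne_top hx hy hx0 hy0 htop
  rw [← ENNReal.ofReal_one]
  refine eratio_le_ofReal zero_le_one hxy htop ?_
  rw [hdist, EReal.toReal_coe, one_mul]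
  exact hilbertDist_mulVec_le_log_sub hA hm hmM hlo hhi

lemma one_le_birkhoffCoeff (hφ : birkhoffPhi A = ⊤) : 1 ≤ birkhoffCoeff A := by
  obtain ⟨i, j, hij⟩ := exists_eq_birkhoffPhi (A := A) (by simp [hφ])
  rw [hφ] at hij
  have hne : i ≠ j := by
    rintro rfl
    simpa [← hij] using hilbertDist_self_le (fun r => A r i)
  have hsingle : ∀ k : Fin p, 0 ≤ (Pi.single k 1 : Fin p → ℝ) := fun k =>
    Pi.single_nonneg.2 zero_le_one
  have hdist : hilbertDist (Pi.single i 1 : Fin p → ℝ) (Pi.single j 1) = ⊤ :=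
    hilbertDist_eq_top_of_pos_of_nonpos (k := i) (j := j) (by simp) (by simp [hne]) (by simp)
  have := eratio_le_birkhoffCoeff (A := A) (hsingle i) (by simp) (hsingle j) (by simp)
    (hdist ▸ EReal.zero_lt_top)
  rw [mulVec_single_one, mulVec_single_one] at this
  change eratio (hilbertDist (fun r => A r i) (fun r => A r j)) _ ≤ _ at this
  simpa [← hij, hdist, eratio] using this

lemma birkhoffCoeff_le_tanh (hA : ∀ i j, 0 ≤ A i j) (hcol : ∀ j, ∃ i, 0 < A i j)
    (hφ : birkhoffPhi A ≠ ⊤) :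
    birkhoffCoeff A ≤ ENNReal.ofReal (tanh ((birkhoffPhi A).toReal / 4)) := by
  have hD := birkhoffPhi_toReal_nonneg hcol
  refine birkhoffCoeff_le fun x y hx hx0 hy hy0 hxy => ?_
  by_cases htop : hilbertDist x y = ⊤
  · rw [htop, eratio_top_of_ne_top (hilbertDist_mulVec_ne_top hA hcol
      ((birkhoffPhi_ne_top_iff hA hcol).1 hφ) hx hx0 hy hy0)]
    exact zero_le
  obtain ⟨m, M, hm, hmM, hlo, hhi, hdist⟩ := exists_bounds_of_hilbertDist_ne_top hx hy hx0 hy0 htop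
  have hmM' : m < M := hmM.lt_of_ne (by rintro rfl; simp [hdist] at hxy)
  refine eratio_le_ofReal (tanh_nonneg (by positivity)) hxy htop ?_
  rw [hdist, EReal.toReal_coe]
  exact hilbertDist_mulVec_le_tanh hA hD (mul_le_exp_mul_of_birkhoffPhi_ne_top hA hcol hφ) hy
    (mulVec_ne_zero hA hcol hy hy0) hm hmM' hlo hhi

lemma mulVec_single_add_smul_single (i j : Fin p) (c : ℝ) :
    A *ᵥ (Pi.single j 1 + c • Pi.single i 1) = fun r => A r j + c * A r i := by
  ext r
  simp [mulVec_add, mulVec_smul]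

lemma hilbertDist_single_add_smul_single {i j : Fin p} (hij : i ≠ j) {θ θ' : ℝ} (hθ : θ' ≤ θ) :
    hilbertDist (Pi.single j 1 + exp θ • Pi.single i 1 : Fin p → ℝ)
      (Pi.single j 1 + exp θ' • Pi.single i 1) = ((θ - θ' : ℝ) : EReal) := by
  have hle : exp θ' ≤ exp θ := exp_le_exp.2 hθ
  have key := hilbertDist_eq_log_sub (i := i) (j := j)
    (x := (Pi.single j 1 + exp θ • Pi.single i 1 : Fin p → ℝ))
    (y := Pi.single j 1 + exp θ' • Pi.single i 1)
    (by simpa [hij] using exp_pos θ) (by simpa [hij] using exp_pos θ') (by simp [hij.symm])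
    (by simp [hij.symm])
    (fun k => by
      by_cases hki : k = i
      · subst hki; simpa [hij] using hle
      · by_cases hkj : k = j <;> simp [hki, hkj, hij.symm])
    (fun k => by
      by_cases hki : k = i
      · subst hki; simp [hij]
      · by_cases hkj : k = j
        · subst hkj; simpa [hki, one_le_div (exp_pos θ')] using hle
        · simp [hki, hkj])
  simpa [hij, hij.symm, ← exp_sub] using key

lemma log_sub_le_hilbertDist_mulVec_single_add_smul_single {i j r r' : Fin p}
    (hri : 0 < A r i) (hrj : 0 < A r j) (hr'i : 0 < A r' i) (hr'j : 0 < A r' j) (θ θ' : ℝ) :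
    ((log (A r i * exp θ + A r j) - log (A r' i * exp θ + A r' j) -
        (log (A r i * exp θ' + A r j) - log (A r' i * exp θ' + A r' j)) : ℝ) : EReal) ≤
      hilbertDist (A *ᵥ (Pi.single j 1 + exp θ • Pi.single i 1))
        (A *ᵥ (Pi.single j 1 + exp θ' • Pi.single i 1)) := by
  rw [mulVec_single_add_smul_single, mulVec_single_add_smul_single]
  refine le_of_eq_of_le ?_ (log_sub_le_hilbertDist (i := r) (j := r') (by positivity)
    (by positivity) (by positivity) (by positivity))
  rw [log_div (by positivity) (by positivity), log_div (by positivity) (by positivity)]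
  simp only [add_comm (A _ j), mul_comm (A _ i)]
  norm_cast
  ring

lemma ofReal_div_le_birkhoffCoeff (hA : ∀ i j, 0 ≤ A i j) (hcol : ∀ j, ∃ i, 0 < A i j)
    (hrows : RowsPosOrZero A) {i j r r' : Fin p} (hij : i ≠ j) (hri : 0 < A r i)
    (hrj : 0 < A r j) (hr'i : 0 < A r' i) (hr'j : 0 < A r' j) {θ θ' : ℝ} (hθ : θ' < θ) :
    ENNReal.ofReal ((log (A r i * exp θ + A r j) - log (A r' i * exp θ + A r' j) -
        (log (A r i * exp θ' + A r j) - log (A r' i * exp θ' + A r' j))) / (θ - θ')) ≤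
      birkhoffCoeff A := by
  have hx : ∀ t : ℝ, (0 : Fin p → ℝ) ≤ Pi.single j 1 + exp t • Pi.single i 1 := fun t =>
    add_nonneg (Pi.single_nonneg.2 zero_le_one)
      (smul_nonneg (exp_pos t).le (Pi.single_nonneg.2 zero_le_one))
  have hx0 : ∀ t : ℝ, (Pi.single j 1 + exp t • Pi.single i 1 : Fin p → ℝ) ≠ 0 :=
    fun t h => by simpa [hij.symm] using congrFun h j
  have hxy := hilbertDist_single_add_smul_single hij hθ.le
  have hAxy := log_sub_le_hilbertDist_mulVec_single_add_smul_single hri hrj hr'i hr'j θ θ'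
  set d := hilbertDist (A *ᵥ (Pi.single j 1 + exp θ • Pi.single i 1))
    (A *ᵥ (Pi.single j 1 + exp θ' • Pi.single i 1))
  have hd : d = (d.toReal : EReal) := (EReal.coe_toReal
    (hilbertDist_mulVec_ne_top hA hcol hrows (hx θ) (hx0 θ) (hx θ') (hx0 θ'))
    (ne_bot_of_le_ne_bot (EReal.coe_ne_bot _) hAxy)).symm
  rw [hd] at hAxy
  calc _ ≤ ENNReal.ofReal (d.toReal / (θ - θ')) :=
        ENNReal.ofReal_le_ofReal (div_le_div_of_nonneg_right (EReal.coe_le_coe_iff.1 hAxy)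
          (sub_pos.2 hθ).le)
    _ = eratio d (hilbertDist _ _) := by rw [hxy, hd, eratio_coe_coe, EReal.toReal_coe]
    _ ≤ birkhoffCoeff A := eratio_le_birkhoffCoeff (hx θ) (hx0 θ) (hx θ') (hx0 θ')
        (by rw [hxy]; exact_mod_cast sub_pos.2 hθ)

lemma tanh_le_birkhoffCoeff (hA : ∀ i j, 0 ≤ A i j) (hcol : ∀ j, ∃ i, 0 < A i j)
    (hφ : birkhoffPhi A ≠ ⊤) :
    ENNReal.ofReal (tanh ((birkhoffPhi A).toReal / 4)) ≤ birkhoffCoeff A := by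
  rcases (birkhoffPhi_toReal_nonneg hcol).eq_or_lt with hD | hD
  · simp [← hD]
  obtain ⟨i, j, hφij⟩ := exists_eq_birkhoffPhi (A := A) fun h => by simp [h] at hD
  have hij : i ≠ j := by
    rintro rfl
    linarith [EReal.toReal_nonpos (hφij ▸ hilbertDist_self_le (fun r => A r i))]
  obtain ⟨r, r', hri, hrj, hr'i, hr'j, hlo, hhi⟩ := exists_extremal_ratios
    (x := fun r => A r i) (y := fun r => A r j) (fun r => hA r i) (fun r => hA r j)
    (col_ne_zero hcol j) fun r => pos_iff_pos_of_birkhoffPhi_ne_top hA hcol hφ r i j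
  have hD_eq : log (A r i / A r j) - log (A r' i / A r' j) = (birkhoffPhi A).toReal := by
    rw [hφij, hilbertDist_eq_log_sub (x := fun r => A r i) (y := fun r => A r j) hri hrj hr'i
      hr'j hlo hhi, EReal.toReal_coe]
  refine le_of_forall_lt fun c hc => ?_
  obtain ⟨θ', θ, hθ, hgap⟩ := exists_lt_log_mul_exp_add_sub hri hrj hr'i hr'j hD_eq
    ((ENNReal.lt_ofReal_iff_toReal_lt hc.ne_top).1 hc)
  refine lt_of_lt_of_le ?_ (ofReal_div_le_birkhoffCoeff hA hcol
    ((birkhoffPhi_ne_top_iff hA hcol).1 hφ) hij hri hrj hr'i hr'j hθ)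
  rwa [ENNReal.lt_ofReal_iff_toReal_lt hc.ne_top, lt_div_iff₀ (sub_pos.2 hθ)]

end

theorem statement15_general {p : ℕ} (A : Matrix (Fin p) (Fin p) ℝ)
    (hnn : ∀ i j, 0 ≤ A i j) (hcol : ∀ j, ∃ i, 0 < A i j) :
    birkhoffCoeff A =
      (if birkhoffPhi A = ⊤ then 1
       else ENNReal.ofReal (Real.tanh ((birkhoffPhi A).toReal / 4))) ∧
    (birkhoffCoeff A < 1 ↔ RowsPosOrZero A) := by
  have hτ : birkhoffCoeff A = if birkhoffPhi A = ⊤ then 1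
      else ENNReal.ofReal (tanh ((birkhoffPhi A).toReal / 4)) := by
    split_ifs with hφ
    · exact le_antisymm (birkhoffCoeff_le_one hnn) (one_le_birkhoffCoeff hφ)
    · exact le_antisymm (birkhoffCoeff_le_tanh hnn hcol hφ) (tanh_le_birkhoffCoeff hnn hcol hφ)
  refine ⟨hτ, ?_⟩
  rw [hτ, ← birkhoffPhi_ne_top_iff hnn hcol]
  split_ifs with hφ
  · simp [hφ]
  · simpa [hφ] using tanh_lt_one _

/-- **Birkhoff's theorem for nonnegative matrices.** For a nonnegative `p×p`
matrix `A` with no zero column, `τ(A) = tanh(φ(A)/4)` (with `tanh(∞/4)` read as `1`); in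
particular `τ(A) < 1` iff every row of `A` is strictly positive or identically zero. -/
theorem statement15 {p : ℕ} (hp : 2 ≤ p) (A : Matrix (Fin p) (Fin p) ℝ)
    (hnn : ∀ i j, 0 ≤ A i j) (hcol : ∀ j, ∃ i, 0 < A i j) :
    birkhoffCoeff A =
      (if birkhoffPhi A = ⊤ then 1
       else ENNReal.ofReal (Real.tanh ((birkhoffPhi A).toReal / 4))) ∧
    (birkhoffCoeff A < 1 ↔ RowsPosOrZero A) :=
  statement15_general A hnn hcol
end

section
/- Let ξ and η be two probability vectors in ℝ^p (nonnegative entries summing to 1) such that at each coordinate i, ξ_i and η_i are either both zero or both strictly positive. Then their total variation distance satisfies ‖ξ − η‖_TV ≤ (1/2)(e^{h(ξ,η)} − 1), where h(ξ, η) is the Hilbert distance of ξ and η. -/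
open MeasureTheory Filter Matrix
open scoped ENNReal

/-- If `ξ, η` are probability vectors in `ℝᵖ` with the same support
(coordinatewise both zero or both positive), then
`‖ξ − η‖_TV ≤ (1/2)(e^{h(ξ,η)} − 1)`, stated equivalently (in `[0,∞]`) as
`2‖ξ − η‖_TV ≤ e^{h(ξ,η)} − 1`. -/
theorem statement16 {p : ℕ} (hp : 1 ≤ p) (ξ η : Fin p → ℝ)
    (hξ : ∀ i, 0 ≤ ξ i) (hξsum : ∑ i, ξ i = 1)
    (hη : ∀ i, 0 ≤ η i) (hηsum : ∑ i, η i = 1)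
    (hsupp : ∀ i, (ξ i = 0 ∧ η i = 0) ∨ (0 < ξ i ∧ 0 < η i)) :
    ENNReal.ofReal (2 * tvNorm (fun i => ξ i - η i)) ≤ EReal.exp (hilbertDist ξ η) - 1 := by
  classical
  -- support
  set S : Finset (Fin p) := Finset.univ.filter (fun i => 0 < η i) with hS
  have hSne : S.Nonempty := by
    by_contra h
    rw [Finset.not_nonempty_iff_eq_empty] at h
    have : ∑ i, η i = 0 := by
      apply Finset.sum_eq_zero
      intro i _
      by_contra hi
      have : i ∈ S := by
        simp only [hS, Finset.mem_filter, Finset.mem_univ, true_and]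
        exact lt_of_le_of_ne (hη i) (Ne.symm hi)
      simp [h] at this
    rw [hηsum] at this; norm_num at this
  have hmemS : ∀ i, i ∈ S ↔ 0 < η i := by
    intro i; simp [hS]
  -- min and max ratios
  set m : ℝ := S.inf' hSne (fun i => ξ i / η i) with hm
  set M : ℝ := S.sup' hSne (fun i => ξ i / η i) with hM
  -- off-support vanishing
  have hzero : ∀ i, i ∉ S → ξ i = 0 ∧ η i = 0 := by
    intro i hi
    rcases hsupp i with h | h
    · exact h
    · exact absurd ((hmemS i).mpr h.2) hi
  -- key pointwise bounds
  have hlow : ∀ i, m * η i ≤ ξ i := by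
    intro i
    by_cases hi : i ∈ S
    · have hηi : 0 < η i := (hmemS i).mp hi
      have := Finset.inf'_le (fun i => ξ i / η i) hi
      calc m * η i ≤ (ξ i / η i) * η i := by nlinarith
        _ = ξ i := by field_simp
    · rcases hzero i hi with ⟨h1, h2⟩; simp [h1, h2]
  have hhigh : ∀ i, ξ i ≤ M * η i := by
    intro i
    by_cases hi : i ∈ S
    · have hηi : 0 < η i := (hmemS i).mp hi
      have := Finset.le_sup' (f := fun i => ξ i / η i) hi
      calc ξ i = (ξ i / η i) * η i := by field_simp
        _ ≤ M * η i := by nlinarith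
    · rcases hzero i hi with ⟨h1, h2⟩; simp [h1, h2]
  have hm1 : m ≤ 1 := by
    have : ∑ i, m * η i ≤ ∑ i, ξ i := Finset.sum_le_sum (fun i _ => hlow i)
    rw [← Finset.mul_sum, hηsum, hξsum, mul_one] at this
    exact this
  have h1M : 1 ≤ M := by
    have : ∑ i, ξ i ≤ ∑ i, M * η i := Finset.sum_le_sum (fun i _ => hhigh i)
    rw [← Finset.mul_sum, hηsum, hξsum, mul_one] at this
    exact this
  have hmpos : 0 < m := by
    rw [hm, Finset.lt_inf'_iff]
    intro i hi
    have hηi : 0 < η i := (hmemS i).mp hi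
    have hξi : 0 < ξ i := by
      rcases hsupp i with h | h
      · exact absurd h.2 (ne_of_gt hηi)
      · exact h.1
    positivity
  -- compute hilbertDen
  have hden : hilbertDen ξ η = ENNReal.ofReal m := by
    apply le_antisymm
    · apply sSup_le
      intro l hl
      obtain ⟨k, hk, hkeq⟩ := Finset.exists_mem_eq_inf' hSne (fun i => ξ i / η i)
      have hηk : 0 < η k := (hmemS k).mp hk
      have h1 := hl k
      have hne : ENNReal.ofReal (η k) ≠ 0 := by
        simp [ENNReal.ofReal_eq_zero, not_le, hηk]
      have : l ≤ ENNReal.ofReal (ξ k) / ENNReal.ofReal (η k) :=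
        ENNReal.le_div_iff_mul_le (Or.inl hne) (Or.inl ENNReal.ofReal_ne_top) |>.mpr h1
      rwa [← ENNReal.ofReal_div_of_pos hηk, ← hkeq] at this
    · apply le_sSup
      intro k
      rw [← ENNReal.ofReal_mul hmpos.le]
      exact ENNReal.ofReal_le_ofReal (hlow k)
  -- compute hilbertNum
  have hnum : hilbertNum ξ η = ENNReal.ofReal M := by
    apply le_antisymm
    · apply sInf_le
      intro k
      rw [← ENNReal.ofReal_mul (le_trans zero_le_one h1M)]
      exact ENNReal.ofReal_le_ofReal (hhigh k)
    · apply le_sInf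
      intro l hl
      obtain ⟨k, hk, hkeq⟩ := Finset.exists_mem_eq_sup' hSne (fun i => ξ i / η i)
      have hηk : 0 < η k := (hmemS k).mp hk
      have h1 := hl k
      have hne : ENNReal.ofReal (η k) ≠ 0 := by
        simp [ENNReal.ofReal_eq_zero, not_le, hηk]
      have : ENNReal.ofReal (ξ k) / ENNReal.ofReal (η k) ≤ l :=
        (ENNReal.div_le_iff hne ENNReal.ofReal_ne_top).mpr h1
      rwa [← ENNReal.ofReal_div_of_pos hηk, ← hkeq] at this
  -- the RHS
  have hrhs : EReal.exp (hilbertDist ξ η) = ENNReal.ofReal (M / m) := by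
    rw [hilbertDist, ENNReal.exp_log, hnum, hden, ← ENNReal.ofReal_div_of_pos hmpos]
  rw [hrhs]
  have h1 : (1 : ℝ≥0∞) = ENNReal.ofReal 1 := by simp
  rw [h1, ← ENNReal.ofReal_sub _ zero_le_one]
  apply ENNReal.ofReal_le_ofReal
  -- real inequality
  have habs : ∀ i, |ξ i - η i| ≤ (M - m) * η i := by
    intro i
    rw [abs_le]
    constructor
    · nlinarith [hlow i, hhigh i, hη i]
    · nlinarith [hlow i, hhigh i, hη i]
  have hsum : ∑ i, |ξ i - η i| ≤ M - m := by
    calc ∑ i, |ξ i - η i| ≤ ∑ i, (M - m) * η i := Finset.sum_le_sum (fun i _ => habs i)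
      _ = M - m := by rw [← Finset.mul_sum, hηsum, mul_one]
  have htv : 2 * tvNorm (fun i => ξ i - η i) = ∑ i, |ξ i - η i| := by
    simp [tvNorm]
  rw [htv]
  have : M - m ≤ M / m - 1 := by
    rw [div_sub_one (ne_of_gt hmpos), le_div_iff₀ hmpos]
    nlinarith
  linarith
end
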